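/- For m ≥ 2, the element x_m = (1/m!) Σ_{σ ∈ S_m} Σ_{j=0}^{m−1} σ̂(c^{⊠j} ⊠ b ⊠ a^{⊠(m−j−1)}) is the unique S_m-invariant element in Ω^{⊠m} of bidegree (2,−1) satisfying ∂(x) = c^{⊠m} − a^{⊠m}, where S_m acts on Ω^{⊠m} by signed permutation of the factors. -/

import Mathlib

/-!
Existence: for each σ the inner sum over j telescopes under ∂, since
∂(c^j ⊠ b ⊠ a^(m-j-1)) = c^(j+1) ⊠ a^(m-j-1) − c^j ⊠ a^(m-j), so every σ contributes
c^m − a^m and the factor 1/m! normalises.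

Uniqueness: let z be the difference of two solutions, so z is invariant, has one b in
every word and ∂z = 0. Take a word w with one b at p and let v be w with that b replaced
by a. The coefficient of v in ∂z is a sum over the positions i of v: a c at i contributes
the coefficient of a word with fewer c's than w, an a at i contributes −z(w) by invariance
(the word is w with positions p and i swapped). By induction on the number of c's the
first kind vanish, and p itself is of the second kind, so z(w) = 0.
-/

/-
Words of single letters are functions Fin m → Fin 3 with 0 = a, 1 = b, 2 = c. On tensors
with at most one b the Koszul signs of the symmetric group action are trivial.
-/

noncomputable section

abbrev TensSp (m : ℕ) : Type := (Fin m → Fin 3) →₀ ℝ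

def bcount {m : ℕ} (w : Fin m → Fin 3) : ℕ :=
  (Finset.univ.filter (fun i => w i = 1)).card

def bBefore {m : ℕ} (w : Fin m → Fin 3) (i : Fin m) : ℕ :=
  (Finset.univ.filter (fun j => j < i ∧ w j = 1)).card

/-- the differential on Ω^{⊠m} restricted to tensors of single letters
(Leibniz extension of ∂b = c − a, ∂a = ∂c = 0 with Koszul signs). -/
def delWord {m : ℕ} (w : Fin m → Fin 3) : TensSp m :=
  ∑ i : Fin m,
    if w i = 1 then
      ((-1 : ℝ) ^ (bBefore w i)) •
        (Finsupp.single (Function.update w i 2) (1 : ℝ)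
          - Finsupp.single (Function.update w i 0) (1 : ℝ))
    else 0

def tensD (m : ℕ) : TensSp m →ₗ[ℝ] TensSp m :=
  Finsupp.lift (TensSp m) ℝ (Fin m → Fin 3) delWord

/-- the basis tensor c^{⊠j} ⊠ b ⊠ a^{⊠(m-j-1)}. -/
def cba (m j : ℕ) : Fin m → Fin 3 :=
  fun i => if (i : ℕ) < j then 2 else if (i : ℕ) = j then 1 else 0

/-- the symmetrized element x_m. -/
def xm (m : ℕ) : TensSp m :=
  ((m.factorial : ℝ))⁻¹ •
    ∑ σ : Equiv.Perm (Fin m), ∑ j ∈ Finset.range m,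
      Finsupp.single (cba m j ∘ ⇑σ) (1 : ℝ)

/-- the bidegree (2,−1) part: span of the tensors of single letters with exactly one b. -/
def OneB (m : ℕ) : Submodule ℝ (TensSp m) :=
  Submodule.span ℝ
    {f : TensSp m | ∃ w : Fin m → Fin 3, bcount w = 1 ∧ f = Finsupp.single w 1}

open Finset Function Equiv

section Update

variable {ι β : Type*} [DecidableEq ι]

lemma filter_update_eq_erase [Fintype ι] [DecidableEq β] (u : ι → β) (i : ι) {x l : β}
    (hx : x ≠ l) :
    univ.filter (fun j => update u i x j = l) = (univ.filter (fun j => u j = l)).erase i := by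
  ext j
  rcases eq_or_ne j i with rfl | hj <;> simp [*]

lemma update_update_eq_comp_swap {w : ι → β} {p i : ι} {a b : β} (hp : w p = b)
    (hi : update w p a i = a) : update (update w p a) i b = w ∘ swap p i := by
  funext j
  simp only [Function.update_apply, comp_apply, swap_apply_def] at hi ⊢
  split_ifs at hi ⊢ <;> simp_all

end Update

lemma Finsupp.apply_comp_perm_of_invariant {ι β M : Type*} [AddCommMonoid M]
    {y : (ι → β) →₀ M}
    (hy : ∀ σ : Perm ι, Finsupp.mapDomain (fun w : ι → β => w ∘ ⇑σ) y = y)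
    (σ : Perm ι) (w : ι → β) : y (w ∘ σ) = y w := by
  conv_lhs => rw [← hy σ]
  exact Finsupp.mapDomain_apply σ.surjective.injective_comp_right y w

def ccount {m : ℕ} (w : Fin m → Fin 3) : ℕ :=
  (univ.filter (fun i => w i = 2)).card

def caWord (m k : ℕ) : Fin m → Fin 3 := fun i => if (i : ℕ) < k then 2 else 0

section Words

variable {m : ℕ}

lemma ccount_update_lt {u : Fin m → Fin 3} {i : Fin m} (hu : u i = 2) {x : Fin 3}
    (hx : x ≠ 2) : ccount (update u i x) < ccount u := by
  rw [ccount, filter_update_eq_erase u i hx]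
  exact card_erase_lt_of_mem (by simp [hu])

lemma ccount_update_of_ne {u : Fin m → Fin 3} {i : Fin m} (hu : u i ≠ 2) {x : Fin 3}
    (hx : x ≠ 2) : ccount (update u i x) = ccount u := by
  rw [ccount, filter_update_eq_erase u i hx, erase_eq_of_notMem (by simp [hu]), ccount]

lemma bcount_comp_perm (w : Fin m → Fin 3) (σ : Perm (Fin m)) :
    bcount (w ∘ σ) = bcount w := by
  simp only [bcount, ← Fintype.card_subtype]
  exact Fintype.card_congr (σ.subtypeEquiv fun _ => Iff.rfl)

lemma bcount_update_one {v : Fin m → Fin 3} (hv : ∀ j, v j ≠ 1) (i : Fin m) :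
    bcount (update v i 1) = 1 :=
  card_eq_one.mpr ⟨i, by ext j; rcases eq_or_ne j i with rfl | hj <;> simp [*]⟩

lemma exists_eq_one_of_bcount_eq_one {w : Fin m → Fin 3} (hw : bcount w = 1) :
    ∃ p, w p = 1 := by
  obtain ⟨p, hp⟩ := card_eq_one.mp hw
  exact ⟨p, by simpa using Finset.ext_iff.mp hp p⟩

lemma eq_of_bcount_eq_one {w : Fin m → Fin 3} (hw : bcount w = 1) {p j : Fin m} (hp : w p = 1)
    (hj : w j = 1) : j = p := by
  obtain ⟨a, ha⟩ := card_eq_one.mp hw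
  have mem : ∀ k, w k = 1 → k = a := fun k hk => mem_singleton.mp (ha ▸ by simp [hk])
  rw [mem j hj, mem p hp]

lemma update_ne_one_of_bcount_eq_one {w : Fin m → Fin 3} (hw : bcount w = 1) {p : Fin m}
    (hp : w p = 1) (j : Fin m) : update w p 0 j ≠ 1 := by
  rcases eq_or_ne j p with rfl | hjp
  · simp
  · simpa [hjp] using mt (eq_of_bcount_eq_one hw hp) hjp

lemma bcount_cba {j : ℕ} (hj : j < m) : bcount (cba m j) = 1 := by
  refine card_eq_one.mpr ⟨⟨j, hj⟩, ?_⟩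
  ext i
  simp only [mem_filter, mem_univ, true_and, mem_singleton, Fin.ext_iff, cba]
  split_ifs <;> simp <;> omega

lemma update_cba_two {j : ℕ} (hj : j < m) :
    update (cba m j) ⟨j, hj⟩ 2 = caWord m (j + 1) := by
  funext i
  simp only [Function.update_apply, cba, caWord, Fin.ext_iff]
  split_ifs <;> omega

lemma update_cba_zero {j : ℕ} (hj : j < m) : update (cba m j) ⟨j, hj⟩ 0 = caWord m j := by
  funext i
  simp only [Function.update_apply, cba, caWord, Fin.ext_iff]
  split_ifs <;> omega

lemma caWord_self : caWord m m = fun _ => 2 := by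
  funext i
  simp [caWord]

lemma caWord_zero : caWord m 0 = fun _ => 0 := rfl

end Words

section Differential

variable {m : ℕ}

lemma delWord_of_bcount_eq_one {w : Fin m → Fin 3} (hw : bcount w = 1) {p : Fin m}
    (hp : w p = 1) :
    delWord w = Finsupp.single (update w p 2) 1 - Finsupp.single (update w p 0) 1 := by
  have hbefore : bBefore w p = 0 :=
    card_eq_zero.mpr <| filter_eq_empty_iff.mpr fun j _ ⟨hjp, hj⟩ =>
      hjp.ne (eq_of_bcount_eq_one hw hp hj)
  rw [delWord, sum_eq_single p (fun j _ hjp => if_neg (mt (eq_of_bcount_eq_one hw hp) hjp))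
    (by simp), if_pos hp, hbefore, pow_zero, one_smul]

lemma tensD_single (w : Fin m → Fin 3) (c : ℝ) :
    tensD m (Finsupp.single w c) = c • delWord w := by
  rw [tensD, Finsupp.lift_apply]
  exact Finsupp.sum_single_index (zero_smul ℝ _)

lemma tensD_apply_of_forall_ne_one {v : Fin m → Fin 3} (hv : ∀ j, v j ≠ 1) (z : TensSp m) :
    tensD m z v = ∑ i, z (update v i 1) *
      ((if v i = 2 then 1 else 0) - (if v i = 0 then 1 else 0)) := by
  induction z using Finsupp.induction_linear with
  | zero => simp
  | add f g hf hg => simp [hf, hg, add_mul, sum_add_distrib]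
  | single w c =>
    rw [tensD_single, Finsupp.smul_apply, smul_eq_mul, delWord, Finsupp.finsetSum_apply,
      Finset.mul_sum]
    refine sum_congr rfl fun i _ => ?_
    rw [Finsupp.single_apply]
    by_cases hw : w = update v i 1
    · subst hw
      have hbefore : bBefore (update v i 1) i = 0 :=
        card_eq_zero.mpr <| filter_eq_empty_iff.mpr fun j _ ⟨hji, hj⟩ =>
          hv j (by rwa [update_of_ne hji.ne] at hj)
      simp [hbefore, Finsupp.single_apply, eq_comm (a := (2 : Fin 3)), eq_comm (a := (0 : Fin 3))]
    · rw [if_neg hw, zero_mul, mul_eq_zero]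
      right
      split_ifs with hwi
      · have hne : ∀ x, update w i x ≠ v := by
          rintro x rfl
          exact hw (by rw [Function.update_idem, update_eq_self_iff.mpr hwi.symm])
        simp [hne]
      · rfl

end Differential

section Uniqueness

variable {m : ℕ} {z : TensSp m}

lemma apply_eq_zero_of_mem_OneB (hz : z ∈ OneB m) {w : Fin m → Fin 3} (hw : bcount w ≠ 1) :
    z w = 0 := by
  have hle : OneB m ≤ Finsupp.supported ℝ ℝ {w : Fin m → Fin 3 | bcount w = 1} :=
    Submodule.span_le.mpr fun _ ⟨w, hw, hf⟩ => hf ▸ Finsupp.single_mem_supported ℝ 1 hw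
  exact Finsupp.notMem_support_iff.mp fun hmem =>
    hw ((Finsupp.mem_supported ℝ z).mp (hle hz) hmem)

lemma apply_eq_zero_of_bcount_eq_one
    (hinv : ∀ σ : Perm (Fin m), Finsupp.mapDomain (fun w : Fin m → Fin 3 => w ∘ ⇑σ) z = z)
    (hdz : tensD m z = 0) (n : ℕ) :
    ∀ w, ccount w = n → bcount w = 1 → z w = 0 := by
  induction n using Nat.strong_induction_on with
  | _ n ih =>
  rintro w rfl hw
  obtain ⟨p, hp⟩ := exists_eq_one_of_bcount_eq_one hw
  set v := update w p 0
  have hv : ∀ j, v j ≠ 1 := update_ne_one_of_bcount_eq_one hw hp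
  have hterm : ∀ i, z (update v i 1) * ((if v i = 2 then 1 else 0) - (if v i = 0 then 1 else 0))
      = if v i = 0 then -z w else 0 := by
    intro i
    by_cases h2 : v i = 2
    · have hlt : ccount (update v i 1) < ccount w :=
        (ccount_update_lt h2 (by decide)).trans_eq
          (ccount_update_of_ne (u := w) (i := p) (by simp [hp]) (by decide))
      simp [ih _ hlt _ rfl (bcount_update_one hv i), h2]
    by_cases h0 : v i = 0
    · rw [update_update_eq_comp_swap hp h0, Finsupp.apply_comp_perm_of_invariant hinv]
      simp [h0]
    · simp [h0, h2]
  have hcoef := congrArg (· v) hdz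
  simp only [tensD_apply_of_forall_ne_one hv, hterm, sum_ite, sum_const_zero, add_zero,
    sum_const, Finsupp.coe_zero, Pi.zero_apply] at hcoef
  have hcard : (univ.filter fun i => v i = 0).card ≠ 0 :=
    card_ne_zero_of_mem (a := p) (by simp [v])
  simpa [hcard] using hcoef

lemma eq_zero_of_tensD_eq_zero (hz : z ∈ OneB m)
    (hinv : ∀ σ : Perm (Fin m), Finsupp.mapDomain (fun w : Fin m → Fin 3 => w ∘ ⇑σ) z = z)
    (hdz : tensD m z = 0) : z = 0 := by
  ext w
  by_cases hw : bcount w = 1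
  · exact apply_eq_zero_of_bcount_eq_one hinv hdz _ w rfl hw
  · exact apply_eq_zero_of_mem_OneB hz hw

end Uniqueness

section Existence

variable (m : ℕ)

lemma xm_mem_OneB : xm m ∈ OneB m :=
  Submodule.smul_mem _ _ <| Submodule.sum_mem _ fun σ _ => Submodule.sum_mem _ fun j hj =>
    Submodule.subset_span ⟨cba m j ∘ σ,
      (bcount_comp_perm _ σ).trans (bcount_cba (mem_range.mp hj)), rfl⟩

lemma xm_invariant (σ : Perm (Fin m)) :
    Finsupp.mapDomain (fun w : Fin m → Fin 3 => w ∘ ⇑σ) (xm m) = xm m := by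
  simp only [xm, Finsupp.mapDomain_smul, Finsupp.mapDomain_finsetSum, Finsupp.mapDomain_single]
  congr 1
  exact Fintype.sum_equiv (Equiv.mulRight σ) _ _ fun τ => rfl

lemma tensD_single_cba_comp {j : ℕ} (hj : j < m) (σ : Perm (Fin m)) :
    tensD m (Finsupp.single (cba m j ∘ σ) 1)
      = Finsupp.single (caWord m (j + 1) ∘ σ) 1 - Finsupp.single (caWord m j ∘ σ) 1 := by
  have hb : bcount (cba m j ∘ σ) = 1 := (bcount_comp_perm _ σ).trans (bcount_cba hj)
  have hp : (cba m j ∘ σ) (σ.symm ⟨j, hj⟩) = 1 := by simp [cba]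
  rw [tensD_single, one_smul, delWord_of_bcount_eq_one hb hp, ← update_comp_equiv,
    ← update_comp_equiv, update_cba_two, update_cba_zero]

lemma tensD_sum_cba_comp (σ : Perm (Fin m)) :
    tensD m (∑ j ∈ range m, Finsupp.single (cba m j ∘ σ) (1 : ℝ))
      = Finsupp.single (fun _ : Fin m => (2 : Fin 3)) 1
        - Finsupp.single (fun _ : Fin m => (0 : Fin 3)) 1 := by
  rw [map_sum, sum_congr rfl fun j hj => tensD_single_cba_comp m (mem_range.mp hj) σ,
    sum_range_sub (fun j => Finsupp.single (caWord m j ∘ σ) (1 : ℝ)), caWord_self, caWord_zero]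
  rfl

lemma tensD_xm :
    tensD m (xm m)
      = Finsupp.single (fun _ : Fin m => (2 : Fin 3)) 1
        - Finsupp.single (fun _ : Fin m => (0 : Fin 3)) 1 := by
  rw [xm, map_smul, map_sum, sum_congr rfl fun σ _ => tensD_sum_cba_comp m σ, sum_const,
    card_univ, Fintype.card_perm, Fintype.card_fin, ← Nat.cast_smul_eq_nsmul ℝ, smul_smul,
    inv_mul_cancel₀ (by positivity), one_smul]

end Existence

theorem stmt11_general (m : ℕ) :
    -- x_m lies in the bidegree (2,−1) part,
    xm m ∈ OneB m ∧
    -- x_m is S_m-invariant,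
    (∀ σ : Equiv.Perm (Fin m),
      Finsupp.mapDomain (fun w : Fin m → Fin 3 => w ∘ ⇑σ) (xm m) = xm m) ∧
    -- x_m solves ∂x = c^{⊠m} − a^{⊠m},
    tensD m (xm m)
      = Finsupp.single (fun _ : Fin m => (2 : Fin 3)) 1
        - Finsupp.single (fun _ : Fin m => (0 : Fin 3)) 1 ∧
    -- and it is the unique such S_m-invariant element of bidegree (2,−1):
    (∀ y : TensSp m, y ∈ OneB m →
      (∀ σ : Equiv.Perm (Fin m),
        Finsupp.mapDomain (fun w : Fin m → Fin 3 => w ∘ ⇑σ) y = y) →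
      tensD m y
        = Finsupp.single (fun _ : Fin m => (2 : Fin 3)) 1
          - Finsupp.single (fun _ : Fin m => (0 : Fin 3)) 1 →
      y = xm m) := by
  refine ⟨xm_mem_OneB m, xm_invariant m, tensD_xm m, fun y hy hinv hdy => ?_⟩
  refine sub_eq_zero.mp (eq_zero_of_tensD_eq_zero (sub_mem hy (xm_mem_OneB m)) (fun σ => ?_) ?_)
  · rw [Finsupp.mapDomain_sub, hinv σ, xm_invariant m σ]
  · rw [map_sub, hdy, tensD_xm, sub_self]

theorem stmt11 (m : ℕ) (hm : 2 ≤ m) :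
    -- x_m lies in the bidegree (2,−1) part,
    xm m ∈ OneB m ∧
    -- x_m is S_m-invariant,
    (∀ σ : Equiv.Perm (Fin m),
      Finsupp.mapDomain (fun w : Fin m → Fin 3 => w ∘ ⇑σ) (xm m) = xm m) ∧
    -- x_m solves ∂x = c^{⊠m} − a^{⊠m},
    tensD m (xm m)
      = Finsupp.single (fun _ : Fin m => (2 : Fin 3)) 1
        - Finsupp.single (fun _ : Fin m => (0 : Fin 3)) 1 ∧
    -- and it is the unique such S_m-invariant element of bidegree (2,−1):
    (∀ y : TensSp m, y ∈ OneB m →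
      (∀ σ : Equiv.Perm (Fin m),
        Finsupp.mapDomain (fun w : Fin m → Fin 3 => w ∘ ⇑σ) y = y) →
      tensD m y
        = Finsupp.single (fun _ : Fin m => (2 : Fin 3)) 1
          - Finsupp.single (fun _ : Fin m => (0 : Fin 3)) 1 →
      y = xm m) :=
  stmt11_general m

end
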